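/- Let Φ be a continuous cocycle over (ℝ, {θ₁(t)}) with θ₁(t)(h) = h + t, let 𝒟 be a neighborhood closed collection of families of nonempty subsets of X, and suppose Φ is 𝒟-pullback asymptotically compact in X and has a closed measurable 𝒟-pullback absorbing set K ∈ 𝒟. Then the unique 𝒟-pullback attractor 𝒜 of Φ satisfies, for every τ ∈ ℝ and ω ∈ Ω₂: 𝒜(τ,ω) = { ξ(τ,ω) : ξ is a 𝒟-complete quasi-solution of Φ }. -/

import Mathlib

/-!
The attractor is the `Ω`-limit set of the absorbing set `K`. Asymptotic compactness makes every
pullback sequence `Φ(tₙ, τ - tₙ, θ₂(-tₙ)ω, xₙ)` with `tₙ → ∞` subconverge, and absorption puts the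
limit into the `Ω`-limit set of `K`; compactness, invariance and attraction all follow from this.
Measurability in `ω` comes from a Castaing representation of `K` by countably many measurable
selections, which makes the distance to each pullback image of `K` measurable; the distance to the
attractor is their limit as `t → ∞`.

Every point of an invariant family lies on a complete trajectory, built backwards at integer times.
Each orbit of `(τ', ω) ↦ (τ' + t, θ₂ t ω)` meets the fibre over `τ` exactly once, so trajectories
chosen along that fibre glue to a complete quasi-solution. Conversely, a quasi-solution inside
`D ∈ 𝒟` lies in every pullback image of `D`, which the attractor attracts.
-/

open MeasureTheory Filter Set Topology
open scoped ENNReal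

namespace RDS

/-- A group of transformations of `α` parametrized by `ℝ`. -/
def IsGroupAction {α : Type*} (θ : ℝ → α → α) : Prop :=
  (∀ a, θ 0 a = a) ∧ ∀ s t : ℝ, ∀ a, θ (s + t) a = θ t (θ s a)

variable {Ω₁ Ω₂ X : Type*} [MetricSpace X] [MeasurableSpace X] [MeasurableSpace Ω₂]

/-- A continuous cocycle on `X` over the parametric dynamical systems
`(Ω₁, θ₁)` and `(Ω₂, ℱ₂, P, θ₂)` (Definition 2.1). -/
structure IsCocycle (θ₁ : ℝ → Ω₁ → Ω₁) (θ₂ : ℝ → Ω₂ → Ω₂)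
    (Φ : ℝ → Ω₁ → Ω₂ → X → X) : Prop where
  measurable : ∀ ω₁ : Ω₁,
    Measurable fun p : {t : ℝ // 0 ≤ t} × Ω₂ × X => Φ p.1.1 ω₁ p.2.1 p.2.2
  map_zero : ∀ (ω₁ : Ω₁) (ω₂ : Ω₂) (x : X), Φ 0 ω₁ ω₂ x = x
  cocycle : ∀ t τ : ℝ, 0 ≤ t → 0 ≤ τ → ∀ (ω₁ : Ω₁) (ω₂ : Ω₂) (x : X),
    Φ (t + τ) ω₁ ω₂ x = Φ t (θ₁ τ ω₁) (θ₂ τ ω₂) (Φ τ ω₁ ω₂ x)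
  continuous : ∀ t : ℝ, 0 ≤ t → ∀ (ω₁ : Ω₁) (ω₂ : Ω₂),
    Continuous fun x : X => Φ t ω₁ ω₂ x

/-- A complete orbit of the cocycle `Φ` (Definition 2.9). -/
def IsCompleteOrbit (θ₁ : ℝ → Ω₁ → Ω₁) (θ₂ : ℝ → Ω₂ → Ω₂)
    (Φ : ℝ → Ω₁ → Ω₂ → X → X) (ψ : ℝ → Ω₁ → Ω₂ → X) : Prop :=
  ∀ t τ : ℝ, 0 ≤ t → ∀ (ω₁ : Ω₁) (ω₂ : Ω₂),
    Φ t (θ₁ τ ω₁) (θ₂ τ ω₂) (ψ τ ω₁ ω₂) = ψ (t + τ) ω₁ ω₂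

/-- A `𝒟`-complete orbit of `Φ`. -/
def IsDCompleteOrbit (θ₁ : ℝ → Ω₁ → Ω₁) (θ₂ : ℝ → Ω₂ → Ω₂)
    (Φ : ℝ → Ω₁ → Ω₂ → X → X) (𝒟 : Set (Ω₁ → Ω₂ → Set X))
    (ψ : ℝ → Ω₁ → Ω₂ → X) : Prop :=
  IsCompleteOrbit θ₁ θ₂ Φ ψ ∧
    ∃ D ∈ 𝒟, ∀ (t : ℝ) (ω₁ : Ω₁) (ω₂ : Ω₂), ψ t ω₁ ω₂ ∈ D (θ₁ t ω₁) (θ₂ t ω₂)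

/-- Positive invariance of a family under `Φ`. -/
def PositivelyInvariant (θ₁ : ℝ → Ω₁ → Ω₁) (θ₂ : ℝ → Ω₂ → Ω₂)
    (Φ : ℝ → Ω₁ → Ω₂ → X → X) (B : Ω₁ → Ω₂ → Set X) : Prop :=
  ∀ t : ℝ, 0 ≤ t → ∀ (ω₁ : Ω₁) (ω₂ : Ω₂),
    Φ t ω₁ ω₂ '' B ω₁ ω₂ ⊆ B (θ₁ t ω₁) (θ₂ t ω₂)

/-- Invariance of a family under `Φ`. -/
def Invariant (θ₁ : ℝ → Ω₁ → Ω₁) (θ₂ : ℝ → Ω₂ → Ω₂)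
    (Φ : ℝ → Ω₁ → Ω₂ → X → X) (B : Ω₁ → Ω₂ → Set X) : Prop :=
  ∀ t : ℝ, 0 ≤ t → ∀ (ω₁ : Ω₁) (ω₂ : Ω₂),
    Φ t ω₁ ω₂ '' B ω₁ ω₂ = B (θ₁ t ω₁) (θ₂ t ω₂)

/-- Quasi-invariance of a family under `Φ`. -/
def QuasiInvariant (θ₁ : ℝ → Ω₁ → Ω₁) (θ₂ : ℝ → Ω₂ → Ω₂)
    (Φ : ℝ → Ω₁ → Ω₂ → X → X) (B : Ω₁ → Ω₂ → Set X) : Prop :=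
  ∀ y : Ω₁ → Ω₂ → X, (∀ (ω₁ : Ω₁) (ω₂ : Ω₂), y ω₁ ω₂ ∈ B ω₁ ω₂) →
    ∃ ψ : ℝ → Ω₁ → Ω₂ → X, IsCompleteOrbit θ₁ θ₂ Φ ψ ∧
      (∀ (ω₁ : Ω₁) (ω₂ : Ω₂), ψ 0 ω₁ ω₂ = y ω₁ ω₂) ∧
      ∀ (t : ℝ) (ω₁ : Ω₁) (ω₂ : Ω₂), ψ t ω₁ ω₂ ∈ B (θ₁ t ω₁) (θ₂ t ω₂)

/-- The Ω-limit set of a family `B` (Definition 2.13). -/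
def omegaLimit (θ₁ : ℝ → Ω₁ → Ω₁) (θ₂ : ℝ → Ω₂ → Ω₂)
    (Φ : ℝ → Ω₁ → Ω₂ → X → X) (B : Ω₁ → Ω₂ → Set X) (ω₁ : Ω₁) (ω₂ : Ω₂) : Set X :=
  ⋂ τ ∈ Ici (0 : ℝ), closure (⋃ t ∈ Ici τ,
    Φ t (θ₁ (-t) ω₁) (θ₂ (-t) ω₂) '' B (θ₁ (-t) ω₁) (θ₂ (-t) ω₂))

/-- `𝒟` is a collection of families of nonempty subsets of `X`. -/
def FamiliesOfNonemptySets (𝒟 : Set (Ω₁ → Ω₂ → Set X)) : Prop :=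
  ∀ D ∈ 𝒟, ∀ (ω₁ : Ω₁) (ω₂ : Ω₂), (D ω₁ ω₂).Nonempty

/-- Neighborhood closedness of the collection `𝒟` (Definition 2.5). -/
def NeighborhoodClosed (𝒟 : Set (Ω₁ → Ω₂ → Set X)) : Prop :=
  ∀ D ∈ 𝒟, ∃ ε : ℝ, 0 < ε ∧ ∀ B : Ω₁ → Ω₂ → Set X,
    (∀ (ω₁ : Ω₁) (ω₂ : Ω₂), (B ω₁ ω₂).Nonempty ∧
      B ω₁ ω₂ ⊆ Metric.thickening ε (D ω₁ ω₂)) → B ∈ 𝒟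

/-- Inclusion closedness of the collection `𝒟`. -/
def InclusionClosed (𝒟 : Set (Ω₁ → Ω₂ → Set X)) : Prop :=
  ∀ D ∈ 𝒟, ∀ B : Ω₁ → Ω₂ → Set X,
    (∀ (ω₁ : Ω₁) (ω₂ : Ω₂), (B ω₁ ω₂).Nonempty ∧ B ω₁ ω₂ ⊆ D ω₁ ω₂) → B ∈ 𝒟

/-- `𝒟`-pullback asymptotic compactness of `Φ` (Definition 2.16). -/
def AsymptoticallyCompact (θ₁ : ℝ → Ω₁ → Ω₁) (θ₂ : ℝ → Ω₂ → Ω₂)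
    (Φ : ℝ → Ω₁ → Ω₂ → X → X) (𝒟 : Set (Ω₁ → Ω₂ → Set X)) : Prop :=
  ∀ (ω₁ : Ω₁) (ω₂ : Ω₂), ∀ B ∈ 𝒟, ∀ (t : ℕ → ℝ) (x : ℕ → X),
    Tendsto t atTop atTop →
    (∀ n, x n ∈ B (θ₁ (-t n) ω₁) (θ₂ (-t n) ω₂)) →
    ∃ (φ : ℕ → ℕ) (y : X), StrictMono φ ∧
      Tendsto (fun n => Φ (t (φ n)) (θ₁ (-t (φ n)) ω₁) (θ₂ (-t (φ n)) ω₂) (x (φ n)))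
        atTop (𝓝 y)

/-- The Hausdorff semi-metric `d(C,B) = sup_{x ∈ C} inf_{b ∈ B} d(x,b)`,
valued in `ℝ≥0∞`. -/
noncomputable def hausSemidist (C B : Set X) : ℝ≥0∞ :=
  ⨆ x ∈ C, EMetric.infEdist x B

/-- The family `A` pullback attracts the family `B` under `Φ`. -/
def Attracts (θ₁ : ℝ → Ω₁ → Ω₁) (θ₂ : ℝ → Ω₂ → Ω₂)
    (Φ : ℝ → Ω₁ → Ω₂ → X → X) (B A : Ω₁ → Ω₂ → Set X) : Prop :=
  ∀ (ω₁ : Ω₁) (ω₂ : Ω₂),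
    Tendsto (fun t : ℝ => hausSemidist
        (Φ t (θ₁ (-t) ω₁) (θ₂ (-t) ω₂) '' B (θ₁ (-t) ω₁) (θ₂ (-t) ω₂)) (A ω₁ ω₂))
      atTop (𝓝 0)

/-- A `𝒟`-pullback absorbing set for `Φ` (Definition 2.15). -/
def IsAbsorbingSet (θ₁ : ℝ → Ω₁ → Ω₁) (θ₂ : ℝ → Ω₂ → Ω₂)
    (Φ : ℝ → Ω₁ → Ω₂ → X → X) (𝒟 : Set (Ω₁ → Ω₂ → Set X))
    (K : Ω₁ → Ω₂ → Set X) : Prop :=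
  K ∈ 𝒟 ∧ ∀ (ω₁ : Ω₁) (ω₂ : Ω₂), ∀ B ∈ 𝒟, ∃ T : ℝ, 0 < T ∧ ∀ t : ℝ, T ≤ t →
    Φ t (θ₁ (-t) ω₁) (θ₂ (-t) ω₂) '' B (θ₁ (-t) ω₁) (θ₂ (-t) ω₂) ⊆ K ω₁ ω₂

/-- A closed measurable (w.r.t. the `P`-completion of `ℱ₂`) `𝒟`-pullback
absorbing set for `Φ`. -/
def IsClosedMeasurableAbsorbingSet (θ₁ : ℝ → Ω₁ → Ω₁) (θ₂ : ℝ → Ω₂ → Ω₂)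
    (Φ : ℝ → Ω₁ → Ω₂ → X → X) (P : Measure Ω₂) (𝒟 : Set (Ω₁ → Ω₂ → Set X))
    (K : Ω₁ → Ω₂ → Set X) : Prop :=
  IsAbsorbingSet θ₁ θ₂ Φ 𝒟 K ∧
    (∀ (ω₁ : Ω₁) (ω₂ : Ω₂), IsClosed (K ω₁ ω₂) ∧ (K ω₁ ω₂).Nonempty) ∧
    ∀ (ω₁ : Ω₁) (x : X), NullMeasurable (fun ω₂ => Metric.infDist x (K ω₁ ω₂)) P

/-- A `𝒟`-pullback attractor for `Φ` (Definition 2.17). -/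
structure IsPullbackAttractor (θ₁ : ℝ → Ω₁ → Ω₁) (θ₂ : ℝ → Ω₂ → Ω₂)
    (Φ : ℝ → Ω₁ → Ω₂ → X → X) (P : Measure Ω₂) (𝒟 : Set (Ω₁ → Ω₂ → Set X))
    (A : Ω₁ → Ω₂ → Set X) : Prop where
  mem : A ∈ 𝒟
  compact : ∀ (ω₁ : Ω₁) (ω₂ : Ω₂), IsCompact (A ω₁ ω₂)
  measurable : ∀ (ω₁ : Ω₁) (x : X),
    NullMeasurable (fun ω₂ => Metric.infDist x (A ω₁ ω₂)) P
  invariant : Invariant θ₁ θ₂ Φ A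
  attracts : ∀ B ∈ 𝒟, Attracts θ₁ θ₂ Φ B A

/-- A complete quasi-solution of `Φ` in the sense of (2.20): a map
`ξ : ℝ × Ω₂ → X` with `Φ(t, τ, ω, ξ(τ, ω)) = ξ(t + τ, θ₂(t) ω)` for all
`t ≥ 0`, `τ ∈ ℝ`, `ω ∈ Ω₂`. -/
def IsQuasiSolution {Ω₂ X : Type*} [MetricSpace X] [MeasurableSpace X]
    [MeasurableSpace Ω₂] (θ₂ : ℝ → Ω₂ → Ω₂) (Φ : ℝ → ℝ → Ω₂ → X → X)
    (ξ : ℝ → Ω₂ → X) : Prop :=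
  ∀ t τ : ℝ, 0 ≤ t → ∀ ω₂ : Ω₂, Φ t τ ω₂ (ξ τ ω₂) = ξ (t + τ) (θ₂ t ω₂)

lemma isGroupAction_add : IsGroupAction fun t h : ℝ => h + t :=
  ⟨add_zero, fun s t a => by ring⟩

namespace IsGroupAction

variable {α : Type*} {θ : ℝ → α → α}

lemma apply_apply_eq (hθ : IsGroupAction θ) {s t u : ℝ} (h : s + t = u) (a : α) :
    θ t (θ s a) = θ u a := by
  rw [← hθ.2, h]

lemma apply_neg_apply (hθ : IsGroupAction θ) (t : ℝ) (a : α) : θ t (θ (-t) a) = a := by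
  rw [hθ.apply_apply_eq (neg_add_cancel t), hθ.1]

end IsGroupAction

section HausSemidist

variable {X : Type*} [MetricSpace X] {C B : Set X} {x : X}

lemma infEDist_le_hausSemidist (hx : x ∈ C) : Metric.infEDist x B ≤ hausSemidist C B :=
  le_iSup₂ (f := fun y (_ : y ∈ C) => Metric.infEDist y B) x hx

lemma hausSemidist_le_iff {r : ℝ≥0∞} :
    hausSemidist C B ≤ r ↔ ∀ x ∈ C, Metric.infEDist x B ≤ r :=
  iSup₂_le_iff

lemma infEDist_le_infEDist_add_hausSemidist :
    Metric.infEDist x B ≤ Metric.infEDist x C + hausSemidist C B := by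
  rw [← tsub_le_iff_right]
  refine Metric.le_infEDist.2 fun y hy => tsub_le_iff_right.2 ?_
  calc Metric.infEDist x B ≤ edist x y + Metric.infEDist y B :=
        Metric.infEDist_le_edist_add_infEDist
    _ ≤ edist x y + hausSemidist C B := add_le_add_right (infEDist_le_hausSemidist hy) _

lemma tendsto_infEDist_of_tendsto_hausSemidist {ι : Type*} {l : Filter ι} {S : ι → Set X}
    (hBS : ∀ i, B ⊆ S i) (h : Tendsto (fun i => hausSemidist (S i) B) l (𝓝 0)) :
    Tendsto (fun i => Metric.infEDist x (S i)) l (𝓝 (Metric.infEDist x B)) := by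
  have hlow : Tendsto (fun i => Metric.infEDist x B - hausSemidist (S i) B) l
      (𝓝 (Metric.infEDist x B)) := by
    simpa using ENNReal.Tendsto.sub tendsto_const_nhds h (Or.inr ENNReal.zero_ne_top)
  refine tendsto_of_tendsto_of_tendsto_of_le_of_le hlow tendsto_const_nhds
    (fun i => tsub_le_iff_right.2 infEDist_le_infEDist_add_hausSemidist)
    (fun i => Metric.infEDist_anti (hBS i))

lemma mem_of_tendsto_hausSemidist {ι : Type*} {l : Filter ι} [l.NeBot] {S : ι → Set X}
    (hB : IsClosed B) (hx : ∀ᶠ i in l, x ∈ S i)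
    (h : Tendsto (fun i => hausSemidist (S i) B) l (𝓝 0)) : x ∈ B := by
  have h0 : Metric.infEDist x B ≤ 0 :=
    ge_of_tendsto h (hx.mono fun i hi => infEDist_le_hausSemidist hi)
  rw [← hB.closure_eq, Metric.mem_closure_iff_infEDist_zero]
  exact le_antisymm h0 bot_le

end HausSemidist

section Pullback

variable {Ω₁ Ω₂ X : Type*} {θ₁ : ℝ → Ω₁ → Ω₁} {θ₂ : ℝ → Ω₂ → Ω₂}
  {Φ : ℝ → Ω₁ → Ω₂ → X → X} {B C K : Ω₁ → Ω₂ → Set X} {t : ℝ} {ω₁ : Ω₁} {ω₂ : Ω₂}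

-- `Attracts` and `omegaLimit` unfold to statements about this set as `t → ∞`.
def pullbackImage (θ₁ : ℝ → Ω₁ → Ω₁) (θ₂ : ℝ → Ω₂ → Ω₂) (Φ : ℝ → Ω₁ → Ω₂ → X → X)
    (B : Ω₁ → Ω₂ → Set X) (t : ℝ) (ω₁ : Ω₁) (ω₂ : Ω₂) : Set X :=
  Φ t (θ₁ (-t) ω₁) (θ₂ (-t) ω₂) '' B (θ₁ (-t) ω₁) (θ₂ (-t) ω₂)

lemma pullbackImage_mono (h : ∀ ω₁ ω₂, B ω₁ ω₂ ⊆ C ω₁ ω₂) :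
    pullbackImage θ₁ θ₂ Φ B t ω₁ ω₂ ⊆ pullbackImage θ₁ θ₂ Φ C t ω₁ ω₂ :=
  image_mono (h _ _)

lemma pullbackImage_of_invariant (hθ₁ : IsGroupAction θ₁) (hθ₂ : IsGroupAction θ₂)
    (hB : Invariant θ₁ θ₂ Φ B) (ht : 0 ≤ t) (ω₁ : Ω₁) (ω₂ : Ω₂) :
    pullbackImage θ₁ θ₂ Φ B t ω₁ ω₂ = B ω₁ ω₂ := by
  rw [pullbackImage, hB t ht, hθ₁.apply_neg_apply, hθ₂.apply_neg_apply]

variable [MetricSpace X] [MeasurableSpace X] [MeasurableSpace Ω₂]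

lemma image_pullbackImage (hθ₁ : IsGroupAction θ₁) (hθ₂ : IsGroupAction θ₂)
    (hΦ : IsCocycle θ₁ θ₂ Φ) {r : ℝ} (hr : 0 ≤ r) (ht : 0 ≤ t) (B : Ω₁ → Ω₂ → Set X)
    (ω₁ : Ω₁) (ω₂ : Ω₂) :
    Φ r ω₁ ω₂ '' pullbackImage θ₁ θ₂ Φ B t ω₁ ω₂ =
      pullbackImage θ₁ θ₂ Φ B (r + t) (θ₁ r ω₁) (θ₂ r ω₂) := by
  have e₁ : θ₁ (-(r + t)) (θ₁ r ω₁) = θ₁ (-t) ω₁ := hθ₁.apply_apply_eq (by ring) ω₁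
  have e₂ : θ₂ (-(r + t)) (θ₂ r ω₂) = θ₂ (-t) ω₂ := hθ₂.apply_apply_eq (by ring) ω₂
  simp only [pullbackImage, image_image, e₁, e₂, hΦ.cocycle r t hr ht, hθ₁.apply_neg_apply,
    hθ₂.apply_neg_apply]

lemma IsAbsorbingSet.eventually_pullbackImage_subset (hθ₁ : IsGroupAction θ₁)
    (hθ₂ : IsGroupAction θ₂) (hΦ : IsCocycle θ₁ θ₂ Φ) {𝒟 : Set (Ω₁ → Ω₂ → Set X)}
    (hK : IsAbsorbingSet θ₁ θ₂ Φ 𝒟 K) (hB : B ∈ 𝒟) {s : ℝ} (hs : 0 ≤ s) (ω₁ : Ω₁) (ω₂ : Ω₂) :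
    ∀ᶠ t in atTop, pullbackImage θ₁ θ₂ Φ B t ω₁ ω₂ ⊆ pullbackImage θ₁ θ₂ Φ K s ω₁ ω₂ := by
  obtain ⟨T, hT, hTK⟩ := hK.2 (θ₁ (-s) ω₁) (θ₂ (-s) ω₂) B hB
  filter_upwards [eventually_ge_atTop (s + T)] with t ht
  have h := image_pullbackImage hθ₁ hθ₂ hΦ hs (by linarith : 0 ≤ t - s) B
    (θ₁ (-s) ω₁) (θ₂ (-s) ω₂)
  rw [add_sub_cancel, hθ₁.apply_neg_apply, hθ₂.apply_neg_apply] at h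
  rw [← h]
  exact image_mono (hTK (t - s) (by linarith))

end Pullback

section OmegaLimit

variable {Ω₁ Ω₂ X : Type*} [MetricSpace X] {θ₁ : ℝ → Ω₁ → Ω₁} {θ₂ : ℝ → Ω₂ → Ω₂}
  {Φ : ℝ → Ω₁ → Ω₂ → X → X} {𝒟 : Set (Ω₁ → Ω₂ → Set X)} {B K : Ω₁ → Ω₂ → Set X}
  {ω₁ : Ω₁} {ω₂ : Ω₂}

lemma mem_omegaLimit_of_tendsto {ι : Type*} {l : Filter ι} [l.NeBot] {z : ι → X} {x : X}
    (hzx : Tendsto z l (𝓝 x))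
    (hz : ∀ s, 0 ≤ s → ∀ᶠ i in l, ∃ t ≥ s, z i ∈ pullbackImage θ₁ θ₂ Φ B t ω₁ ω₂) :
    x ∈ omegaLimit θ₁ θ₂ Φ B ω₁ ω₂ := by
  refine mem_iInter₂.2 fun s hs => mem_closure_of_tendsto hzx ?_
  filter_upwards [hz s hs] with i ⟨t, hts, hi⟩
  exact mem_biUnion hts hi

lemma exists_mem_pullbackImage_dist_lt {x : X} (hx : x ∈ omegaLimit θ₁ θ₂ Φ B ω₁ ω₂)
    {c δ : ℝ} (hc : 0 ≤ c) (hδ : 0 < δ) :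
    ∃ t ≥ c, ∃ z ∈ pullbackImage θ₁ θ₂ Φ B t ω₁ ω₂, dist z x < δ := by
  obtain ⟨z, hz, hzx⟩ := Metric.mem_closure_iff.1 (mem_iInter₂.1 hx c hc) δ hδ
  obtain ⟨t, ht, hzt⟩ := mem_iUnion₂.1 hz
  exact ⟨t, ht, z, hzt, by rwa [dist_comm]⟩

lemma exists_seq_pullbackImage_dist_tendsto_zero {u : ℕ → X}
    (hu : ∀ n, u n ∈ omegaLimit θ₁ θ₂ Φ B ω₁ ω₂) {c : ℝ} (hc : 0 ≤ c) :
    ∃ (t : ℕ → ℝ) (z : ℕ → X), (∀ n, c ≤ t n) ∧ Tendsto t atTop atTop ∧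
      (∀ n, z n ∈ pullbackImage θ₁ θ₂ Φ B (t n) ω₁ ω₂) ∧
      Tendsto (fun n => dist (z n) (u n)) atTop (𝓝 0) := by
  choose t ht z hz hzu using fun n : ℕ =>
    exists_mem_pullbackImage_dist_lt (hu n) (by positivity : 0 ≤ c + n) Nat.one_div_pos_of_nat
  refine ⟨t, z, fun n => (le_add_of_nonneg_right n.cast_nonneg).trans (ht n),
    tendsto_atTop_mono ht (tendsto_atTop_add_const_left _ c tendsto_natCast_atTop_atTop), hz,
    squeeze_zero (fun n => dist_nonneg) (fun n => (hzu n).le)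
      tendsto_one_div_add_atTop_nhds_zero_nat⟩

lemma omegaLimit_subset (hK : IsAbsorbingSet θ₁ θ₂ Φ 𝒟 K)
    (hKcl : ∀ ω₁ ω₂, IsClosed (K ω₁ ω₂)) (ω₁ : Ω₁) (ω₂ : Ω₂) :
    omegaLimit θ₁ θ₂ Φ K ω₁ ω₂ ⊆ K ω₁ ω₂ := by
  obtain ⟨T, hT, hTK⟩ := hK.2 ω₁ ω₂ K hK.1
  exact (biInter_subset_of_mem (mem_Ici.2 hT.le)).trans
    (closure_minimal (iUnion₂_subset fun t ht => hTK t ht) (hKcl ω₁ ω₂))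

variable [MeasurableSpace X] [MeasurableSpace Ω₂]

lemma exists_subseq_tendsto_mem_omegaLimit (hθ₁ : IsGroupAction θ₁) (hθ₂ : IsGroupAction θ₂)
    (hΦ : IsCocycle θ₁ θ₂ Φ) (hac : AsymptoticallyCompact θ₁ θ₂ Φ 𝒟)
    (hK : IsAbsorbingSet θ₁ θ₂ Φ 𝒟 K) (hB : B ∈ 𝒟) {t : ℕ → ℝ} {z : ℕ → X}
    (ht : Tendsto t atTop atTop) (hz : ∀ n, z n ∈ pullbackImage θ₁ θ₂ Φ B (t n) ω₁ ω₂) :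
    ∃ (φ : ℕ → ℕ) (y : X), StrictMono φ ∧ y ∈ omegaLimit θ₁ θ₂ Φ K ω₁ ω₂ ∧
      Tendsto (z ∘ φ) atTop (𝓝 y) := by
  choose x hx hxz using hz
  obtain ⟨φ, y, hφ, hy⟩ := hac ω₁ ω₂ B hB t x ht hx
  have hzy : Tendsto (z ∘ φ) atTop (𝓝 y) := by
    simpa only [Function.comp_def, hxz] using hy
  refine ⟨φ, y, hφ, mem_omegaLimit_of_tendsto hzy fun s hs => ?_, hzy⟩
  filter_upwards [(ht.comp hφ.tendsto_atTop).eventually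
    (hK.eventually_pullbackImage_subset hθ₁ hθ₂ hΦ hB hs ω₁ ω₂)] with n hn
  exact ⟨s, le_rfl, hn ⟨x (φ n), hx (φ n), hxz (φ n)⟩⟩

lemma omegaLimit_nonempty (hθ₁ : IsGroupAction θ₁) (hθ₂ : IsGroupAction θ₂)
    (hΦ : IsCocycle θ₁ θ₂ Φ) (hac : AsymptoticallyCompact θ₁ θ₂ Φ 𝒟)
    (hK : IsAbsorbingSet θ₁ θ₂ Φ 𝒟 K) (hKne : ∀ ω₁ ω₂, (K ω₁ ω₂).Nonempty) (ω₁ : Ω₁) (ω₂ : Ω₂) :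
    (omegaLimit θ₁ θ₂ Φ K ω₁ ω₂).Nonempty := by
  choose z hz using fun n : ℕ => ((hKne _ _).image _ : (pullbackImage θ₁ θ₂ Φ K n ω₁ ω₂).Nonempty)
  obtain ⟨-, y, -, hy, -⟩ := exists_subseq_tendsto_mem_omegaLimit hθ₁ hθ₂ hΦ hac hK hK.1
    tendsto_natCast_atTop_atTop hz
  exact ⟨y, hy⟩

lemma isCompact_omegaLimit (hθ₁ : IsGroupAction θ₁) (hθ₂ : IsGroupAction θ₂)
    (hΦ : IsCocycle θ₁ θ₂ Φ) (hac : AsymptoticallyCompact θ₁ θ₂ Φ 𝒟)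
    (hK : IsAbsorbingSet θ₁ θ₂ Φ 𝒟 K) (ω₁ : Ω₁) (ω₂ : Ω₂) :
    IsCompact (omegaLimit θ₁ θ₂ Φ K ω₁ ω₂) := by
  refine IsSeqCompact.isCompact fun u hu => ?_
  obtain ⟨t, z, -, ht, hz, hzu⟩ := exists_seq_pullbackImage_dist_tendsto_zero hu le_rfl
  obtain ⟨φ, y, hφ, hy, hzy⟩ := exists_subseq_tendsto_mem_omegaLimit hθ₁ hθ₂ hΦ hac hK hK.1 ht hz
  exact ⟨y, hy, φ, hφ, hzy.congr_dist (hzu.comp hφ.tendsto_atTop)⟩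

lemma omegaLimit_attracts (hθ₁ : IsGroupAction θ₁) (hθ₂ : IsGroupAction θ₂)
    (hΦ : IsCocycle θ₁ θ₂ Φ) (hac : AsymptoticallyCompact θ₁ θ₂ Φ 𝒟)
    (hK : IsAbsorbingSet θ₁ θ₂ Φ 𝒟 K) (hB : B ∈ 𝒟) :
    Attracts θ₁ θ₂ Φ B (omegaLimit θ₁ θ₂ Φ K) := by
  intro ω₁ ω₂
  refine ENNReal.tendsto_nhds_zero.2 fun ε hε => ?_
  by_contra hfreq
  choose t ht hfar using fun n : ℕ => frequently_atTop.1 (not_eventually.1 hfreq) n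
  have hz : ∀ n, ∃ z ∈ pullbackImage θ₁ θ₂ Φ B (t n) ω₁ ω₂,
      ε < Metric.infEDist z (omegaLimit θ₁ θ₂ Φ K ω₁ ω₂) := by
    intro n
    by_contra! h
    exact hfar n (hausSemidist_le_iff.2 h)
  choose z hz hzε using hz
  obtain ⟨φ, y, -, hy, hzy⟩ := exists_subseq_tendsto_mem_omegaLimit hθ₁ hθ₂ hΦ hac hK hB
    (tendsto_atTop_mono ht tendsto_natCast_atTop_atTop) hz
  obtain ⟨n, hn⟩ := (hzy.eventually (Metric.eball_mem_nhds y hε)).exists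
  exact (hzε (φ n)).not_ge ((Metric.infEDist_le_edist_of_mem hy).trans hn.le)

lemma image_omegaLimit_subset (hθ₁ : IsGroupAction θ₁) (hθ₂ : IsGroupAction θ₂)
    (hΦ : IsCocycle θ₁ θ₂ Φ) {r : ℝ} (hr : 0 ≤ r) (ω₁ : Ω₁) (ω₂ : Ω₂) :
    Φ r ω₁ ω₂ '' omegaLimit θ₁ θ₂ Φ K ω₁ ω₂ ⊆ omegaLimit θ₁ θ₂ Φ K (θ₁ r ω₁) (θ₂ r ω₂) := by
  rintro _ ⟨x, hx, rfl⟩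
  obtain ⟨t, z, ht0, ht, hz, hzx⟩ :=
    exists_seq_pullbackImage_dist_tendsto_zero (fun _ => hx) le_rfl
  refine mem_omegaLimit_of_tendsto
    (((hΦ.continuous r hr ω₁ ω₂).tendsto x).comp (tendsto_iff_dist_tendsto_zero.2 hzx))
    fun s _ => ?_
  filter_upwards [(tendsto_atTop_add_const_left _ r ht).eventually_ge_atTop s] with n hn
  refine ⟨r + t n, hn, ?_⟩
  rw [← image_pullbackImage hθ₁ hθ₂ hΦ hr (ht0 n)]
  exact mem_image_of_mem _ (hz n)

lemma omegaLimit_subset_image (hθ₁ : IsGroupAction θ₁) (hθ₂ : IsGroupAction θ₂)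
    (hΦ : IsCocycle θ₁ θ₂ Φ) (hac : AsymptoticallyCompact θ₁ θ₂ Φ 𝒟)
    (hK : IsAbsorbingSet θ₁ θ₂ Φ 𝒟 K) {r : ℝ} (hr : 0 ≤ r) (ω₁ : Ω₁) (ω₂ : Ω₂) :
    omegaLimit θ₁ θ₂ Φ K (θ₁ r ω₁) (θ₂ r ω₂) ⊆ Φ r ω₁ ω₂ '' omegaLimit θ₁ θ₂ Φ K ω₁ ω₂ := by
  intro y hy
  obtain ⟨t, z, htr, ht, hz, hzy⟩ :=
    exists_seq_pullbackImage_dist_tendsto_zero (fun _ => hy) hr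
  have hw : ∀ n, ∃ w ∈ pullbackImage θ₁ θ₂ Φ K (t n - r) ω₁ ω₂, Φ r ω₁ ω₂ w = z n := by
    intro n
    rw [← mem_image, image_pullbackImage hθ₁ hθ₂ hΦ hr (sub_nonneg.2 (htr n)), add_sub_cancel]
    exact hz n
  choose w hw hwz using hw
  have htr' : Tendsto (fun n => t n - r) atTop atTop := by
    simpa only [sub_eq_add_neg] using tendsto_atTop_add_const_right _ (-r) ht
  obtain ⟨φ, x, hφ, hx, hwx⟩ :=
    exists_subseq_tendsto_mem_omegaLimit hθ₁ hθ₂ hΦ hac hK hK.1 htr' hw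
  have hzx : Tendsto (z ∘ φ) atTop (𝓝 (Φ r ω₁ ω₂ x)) := by
    simpa only [Function.comp_def, hwz] using
      ((hΦ.continuous r hr ω₁ ω₂).tendsto x).comp hwx
  have hzy' : Tendsto (z ∘ φ) atTop (𝓝 y) :=
    (tendsto_iff_dist_tendsto_zero.2 hzy).comp hφ.tendsto_atTop
  exact ⟨x, hx, tendsto_nhds_unique hzx hzy'⟩

lemma omegaLimit_invariant (hθ₁ : IsGroupAction θ₁) (hθ₂ : IsGroupAction θ₂)
    (hΦ : IsCocycle θ₁ θ₂ Φ) (hac : AsymptoticallyCompact θ₁ θ₂ Φ 𝒟)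
    (hK : IsAbsorbingSet θ₁ θ₂ Φ 𝒟 K) : Invariant θ₁ θ₂ Φ (omegaLimit θ₁ θ₂ Φ K) :=
  fun _ hr ω₁ ω₂ => (image_omegaLimit_subset hθ₁ hθ₂ hΦ hr ω₁ ω₂).antisymm
    (omegaLimit_subset_image hθ₁ hθ₂ hΦ hac hK hr ω₁ ω₂)

end OmegaLimit

section MeasurableSelection

open TopologicalSpace Metric

variable {Ω X : Type*} [MeasurableSpace Ω] [MetricSpace X] [SecondCountableTopology X]
  {K : Ω → Set X}

lemma exists_measurable_index_infDist_lt [Nonempty X] (hKne : ∀ ω, (K ω).Nonempty)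
    (hKm : ∀ x, Measurable fun ω => infDist x (K ω)) {n : Ω → ℕ} (hn : Measurable n)
    {δ δ' : ℝ} (h : ∀ ω, infDist (denseSeq X (n ω)) (K ω) < δ) (hδ' : 0 < δ') :
    ∃ n' : Ω → ℕ, Measurable n' ∧ ∀ ω, infDist (denseSeq X (n' ω)) (K ω) < δ' ∧
      dist (denseSeq X (n' ω)) (denseSeq X (n ω)) < δ' + δ := by
  classical
  have hex : ∀ ω, ∃ k, infDist (denseSeq X k) (K ω) < δ' ∧
      dist (denseSeq X k) (denseSeq X (n ω)) < δ' + δ := by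
    intro ω
    obtain ⟨y, hy, hny⟩ := (infDist_lt_iff (hKne ω)).1 (h ω)
    obtain ⟨k, hk⟩ := (denseRange_denseSeq X).exists_dist_lt y hδ'
    rw [dist_comm] at hk hny
    exact ⟨k, (infDist_le_dist_of_mem hy).trans_lt hk,
      (dist_triangle _ y _).trans_lt (add_lt_add hk hny)⟩
  refine ⟨fun ω => Nat.find (hex ω), measurable_find hex fun k => ?_,
    fun ω => Nat.find_spec (hex ω)⟩
  exact (measurableSet_lt (hKm _) measurable_const).inter (measurableSet_lt
    ((measurable_from_nat (f := fun j => dist (denseSeq X k) (denseSeq X j))).comp hn)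
    measurable_const)

variable [MeasurableSpace X] [BorelSpace X]

-- Successive approximation along the dense sequence: at step `p` the index is measurable and
-- `ε 2⁻ᵖ`-close to `K ω`, and the points converge to a measurable selection.
lemma exists_measurable_selection_dist_le [Nonempty X] [CompleteSpace X]
    (hKcl : ∀ ω, IsClosed (K ω)) (hKne : ∀ ω, (K ω).Nonempty)
    (hKm : ∀ x, Measurable fun ω => infDist x (K ω)) {n₀ : Ω → ℕ} (hn₀ : Measurable n₀)
    {ε : ℝ} (hε : 0 < ε) (h₀ : ∀ ω, infDist (denseSeq X (n₀ ω)) (K ω) < ε) :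
    ∃ s : Ω → X, Measurable s ∧ ∀ ω, s ω ∈ K ω ∧ dist (denseSeq X (n₀ ω)) (s ω) ≤ 4 * ε := by
  set q := denseSeq X
  choose! next hnext_meas hnext using fun (p : ℕ) (n : Ω → ℕ) (hn : Measurable n)
      (h : ∀ ω, infDist (q (n ω)) (K ω) < ε * (1 / 2) ^ p) =>
    exists_measurable_index_infDist_lt hKne hKm hn h (by positivity : 0 < ε * (1 / 2) ^ (p + 1))
  let idx : ℕ → Ω → ℕ := fun p => Nat.rec n₀ next p
  have hidx : ∀ p, Measurable (idx p) ∧ ∀ ω, infDist (q (idx p ω)) (K ω) < ε * (1 / 2) ^ p := by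
    intro p
    induction p with
    | zero => exact ⟨hn₀, fun ω => (h₀ ω).trans_eq (by ring)⟩
    | succ p ih => exact ⟨hnext_meas p _ ih.1 ih.2, fun ω => (hnext p _ ih.1 ih.2 ω).1⟩
  have hstep : ∀ ω p, dist (q (idx p ω)) (q (idx (p + 1) ω)) ≤ 2 * ε * (1 / 2) ^ p := by
    intro ω p
    calc dist (q (idx p ω)) (q (idx (p + 1) ω))
        = dist (q (next p (idx p) ω)) (q (idx p ω)) := dist_comm _ _
      _ ≤ ε * (1 / 2) ^ (p + 1) + ε * (1 / 2) ^ p := (hnext p _ (hidx p).1 (hidx p).2 ω).2.le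
      _ ≤ 2 * ε * (1 / 2) ^ p := by
        rw [pow_succ]; nlinarith [pow_pos (one_half_pos : (0 : ℝ) < 1 / 2) p]
  choose s hs using fun ω => cauchySeq_tendsto_of_complete
    (cauchySeq_of_le_geometric (1 / 2) (2 * ε) one_half_lt_one (hstep ω))
  refine ⟨s, measurable_of_tendsto_metrizable (fun p => measurable_from_nat.comp (hidx p).1)
    (tendsto_pi_nhds.2 hs), fun ω => ⟨?_, ?_⟩⟩
  · have hlim : Tendsto (fun p : ℕ => ε * (1 / 2) ^ p) atTop (𝓝 0) := by
      simpa using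
        (tendsto_pow_atTop_nhds_zero_of_lt_one one_half_pos.le one_half_lt_one).const_mul ε
    rw [(hKcl ω).mem_iff_infDist_zero (hKne ω)]
    exact le_antisymm (le_of_tendsto_of_tendsto' (((continuous_infDist_pt _).tendsto _).comp (hs ω))
      hlim fun p => ((hidx p).2 ω).le) infDist_nonneg
  · calc dist (q (idx 0 ω)) (s ω)
        ≤ 2 * ε / (1 - 1 / 2) :=
          dist_le_of_le_geometric_of_tendsto₀ (1 / 2) (2 * ε) one_half_lt_one (hstep ω) (hs ω)
      _ = 4 * ε := by ring

lemma exists_measurable_dense_selections [CompleteSpace X] [Nonempty X]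
    (hKcl : ∀ ω, IsClosed (K ω)) (hKne : ∀ ω, (K ω).Nonempty)
    (hKm : ∀ x, Measurable fun ω => infDist x (K ω)) :
    ∃ s : ℕ × ℕ → Ω → X, (∀ m, Measurable (s m)) ∧ (∀ m ω, s m ω ∈ K ω) ∧
      ∀ ω, K ω ⊆ closure (range fun m => s m ω) := by
  classical
  set q := denseSeq X
  have hex : ∀ (j : ℕ) ω, ∃ k, infDist (q k) (K ω) < (1 / 2) ^ j := fun j ω =>
    let ⟨y, hy⟩ := hKne ω
    let ⟨k, hk⟩ := (denseRange_denseSeq X).exists_dist_lt y (by positivity : (0 : ℝ) < (1 / 2) ^ j)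
    ⟨k, (infDist_le_dist_of_mem hy).trans_lt (by rwa [dist_comm])⟩
  have hidx : ∀ m j : ℕ, ∃ n : Ω → ℕ, Measurable n ∧
      (∀ ω, infDist (q (n ω)) (K ω) < (1 / 2) ^ j) ∧
      ∀ ω, infDist (q m) (K ω) < (1 / 2) ^ j → n ω = m := by
    intro m j
    refine ⟨fun ω => if infDist (q m) (K ω) < (1 / 2) ^ j then m else Nat.find (hex j ω),
      Measurable.ite (measurableSet_lt (hKm _) measurable_const) measurable_const
        (measurable_find _ fun k => measurableSet_lt (hKm _) measurable_const),
      fun ω => ?_, fun ω h => if_pos h⟩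
    dsimp only
    split_ifs with h
    exacts [h, Nat.find_spec (hex j ω)]
  choose n hnm hnK hn using hidx
  choose s hsm hs using fun mj : ℕ × ℕ =>
    exists_measurable_selection_dist_le hKcl hKne hKm (hnm mj.1 mj.2) (by positivity)
      (hnK mj.1 mj.2)
  refine ⟨s, hsm, fun m ω => (hs m ω).1, fun ω y hy => Metric.mem_closure_iff.2 fun ε hε => ?_⟩
  obtain ⟨j, hj⟩ := exists_pow_lt_of_lt_one (by positivity : 0 < ε / 5) one_half_lt_one
  obtain ⟨m, hm⟩ := (denseRange_denseSeq X).exists_dist_lt y (by positivity : (0 : ℝ) < (1 / 2) ^ j)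
  have hms := (hs (m, j) ω).2
  rw [hn m j ω ((infDist_le_dist_of_mem hy).trans_lt (by rwa [dist_comm]))] at hms
  refine ⟨s (m, j) ω, mem_range_self _, ?_⟩
  calc dist y (s (m, j) ω) ≤ dist y (q m) + dist (q m) (s (m, j) ω) := dist_triangle _ _ _
    _ < ε := by linarith

lemma measurable_infEDist_image [CompleteSpace X] (hKcl : ∀ ω, IsClosed (K ω))
    (hKne : ∀ ω, (K ω).Nonempty) (hKm : ∀ x, Measurable fun ω => infDist x (K ω))
    {g : Ω → X → X} (hg : Measurable (Function.uncurry g)) (hgc : ∀ ω, Continuous (g ω))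
    (x : X) : Measurable fun ω => infEDist x (g ω '' K ω) := by
  have : Nonempty X := ⟨x⟩
  obtain ⟨s, hsm, hsK, hKs⟩ := exists_measurable_dense_selections hKcl hKne hKm
  have key : ∀ ω, infEDist x (g ω '' K ω) = ⨅ m, edist x (g ω (s m ω)) := by
    intro ω
    have h : infEDist x (g ω '' K ω) = infEDist x (g ω '' range fun m => s m ω) := by
      refine le_antisymm (infEDist_anti (image_mono (range_subset_iff.2 fun m => hsK m ω))) ?_
      rw [← infEDist_closure (s := g ω '' _)]
      exact infEDist_anti ((image_mono (hKs ω)).trans (image_closure_subset_closure_image (hgc ω)))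
    rw [h, ← range_comp, infEDist, iInf_range]
    rfl
  simp only [key]
  exact Measurable.iInf fun m => measurable_const.edist (hg.comp (measurable_id.prodMk (hsm m)))

end MeasurableSelection

section Measurability

variable {Ω₁ Ω₂ X : Type*} [MetricSpace X] [CompleteSpace X] [SecondCountableTopology X]
  [MeasurableSpace X] [BorelSpace X] [MeasurableSpace Ω₂] {P : Measure Ω₂}
  {θ₁ : ℝ → Ω₁ → Ω₁} {θ₂ : ℝ → Ω₂ → Ω₂} {Φ : ℝ → Ω₁ → Ω₂ → X → X} {K : Ω₁ → Ω₂ → Set X}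

lemma nullMeasurable_infEDist_pullbackImage (hθ₂P : ∀ t, MeasurePreserving (θ₂ t) P P)
    (hΦ : IsCocycle θ₁ θ₂ Φ) (hKcl : ∀ ω₁ ω₂, IsClosed (K ω₁ ω₂))
    (hKne : ∀ ω₁ ω₂, (K ω₁ ω₂).Nonempty)
    (hKm : ∀ ω₁ x, NullMeasurable (fun ω₂ => Metric.infDist x (K ω₁ ω₂)) P)
    {t : ℝ} (ht : 0 ≤ t) (ω₁ : Ω₁) (x : X) :
    NullMeasurable (fun ω₂ => Metric.infEDist x (pullbackImage θ₁ θ₂ Φ K t ω₁ ω₂)) P := by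
  have hid : @Measurable (NullMeasurableSpace Ω₂ P) Ω₂ _ _ id :=
    fun _ hs => hs.nullMeasurableSet
  have hΦm : Measurable fun p : NullMeasurableSpace Ω₂ P × X => Φ t (θ₁ (-t) ω₁) p.1 p.2 :=
    (hΦ.measurable (θ₁ (-t) ω₁)).comp (f := fun p : NullMeasurableSpace Ω₂ P × X =>
      ((⟨t, ht⟩ : {t : ℝ // 0 ≤ t}), (p.1 : Ω₂), p.2))
      (measurable_const.prodMk ((hid.comp measurable_fst).prodMk measurable_snd))
  have hF : NullMeasurable
      (fun ω₂ => Metric.infEDist x (Φ t (θ₁ (-t) ω₁) ω₂ '' K (θ₁ (-t) ω₁) ω₂)) P :=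
    measurable_infEDist_image (Ω := NullMeasurableSpace Ω₂ P) (hKcl _) (hKne _) (hKm _) hΦm
      (hΦ.continuous t ht _) x
  exact hF.comp_quasiMeasurePreserving (hθ₂P (-t)).quasiMeasurePreserving

lemma nullMeasurable_infDist_omegaLimit (hθ₁ : IsGroupAction θ₁) (hθ₂ : IsGroupAction θ₂)
    (hθ₂P : ∀ t, MeasurePreserving (θ₂ t) P P) (hΦ : IsCocycle θ₁ θ₂ Φ)
    {𝒟 : Set (Ω₁ → Ω₂ → Set X)} (hac : AsymptoticallyCompact θ₁ θ₂ Φ 𝒟)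
    (hK : IsClosedMeasurableAbsorbingSet θ₁ θ₂ Φ P 𝒟 K) (ω₁ : Ω₁) (x : X) :
    NullMeasurable (fun ω₂ => Metric.infDist x (omegaLimit θ₁ θ₂ Φ K ω₁ ω₂)) P := by
  obtain ⟨hKabs, hKclne, hKm⟩ := hK
  have hKcl ω₁ ω₂ := (hKclne ω₁ ω₂).1
  have hlim : ∀ ω₂, Tendsto (fun n : ℕ => Metric.infEDist x (pullbackImage θ₁ θ₂ Φ K n ω₁ ω₂))
      atTop (𝓝 (Metric.infEDist x (omegaLimit θ₁ θ₂ Φ K ω₁ ω₂))) := fun ω₂ =>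
    tendsto_infEDist_of_tendsto_hausSemidist
      (fun n => (pullbackImage_of_invariant hθ₁ hθ₂ (omegaLimit_invariant hθ₁ hθ₂ hΦ hac hKabs)
        n.cast_nonneg ω₁ ω₂).symm.subset.trans (pullbackImage_mono (omegaLimit_subset hKabs hKcl)))
      ((omegaLimit_attracts hθ₁ hθ₂ hΦ hac hKabs hKabs.1 ω₁ ω₂).comp tendsto_natCast_atTop_atTop)
  have hE : NullMeasurable (fun ω₂ => Metric.infEDist x (omegaLimit θ₁ θ₂ Φ K ω₁ ω₂)) P :=
    measurable_of_tendsto_metrizable (fun n => nullMeasurable_infEDist_pullbackImage hθ₂P hΦ hKcl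
      (fun ω₁ ω₂ => (hKclne ω₁ ω₂).2) hKm n.cast_nonneg ω₁ x) (tendsto_pi_nhds.2 hlim)
  exact ENNReal.measurable_toReal.comp hE

end Measurability

section PullbackAttractor

variable {Ω₁ Ω₂ X : Type*} [MetricSpace X] {θ₁ : ℝ → Ω₁ → Ω₁} {θ₂ : ℝ → Ω₂ → Ω₂}
  {Φ : ℝ → Ω₁ → Ω₂ → X → X}
  {𝒟 : Set (Ω₁ → Ω₂ → Set X)} {A A' K : Ω₁ → Ω₂ → Set X}

lemma subset_of_attracts (hθ₁ : IsGroupAction θ₁) (hθ₂ : IsGroupAction θ₂)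
    (hA' : Invariant θ₁ θ₂ Φ A') (hA : ∀ ω₁ ω₂, IsClosed (A ω₁ ω₂))
    (h : Attracts θ₁ θ₂ Φ A' A) (ω₁ : Ω₁) (ω₂ : Ω₂) : A' ω₁ ω₂ ⊆ A ω₁ ω₂ := fun _ hx =>
  mem_of_tendsto_hausSemidist (hA ω₁ ω₂) ((eventually_ge_atTop 0).mono fun _ ht =>
    (pullbackImage_of_invariant hθ₁ hθ₂ hA' ht ω₁ ω₂).superset hx) (h ω₁ ω₂)

variable [MeasurableSpace Ω₂] {P : Measure Ω₂}

lemma IsPullbackAttractor.eq (hθ₁ : IsGroupAction θ₁) (hθ₂ : IsGroupAction θ₂)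
    (hA : IsPullbackAttractor θ₁ θ₂ Φ P 𝒟 A) (hA' : IsPullbackAttractor θ₁ θ₂ Φ P 𝒟 A') :
    A = A' :=
  funext₂ fun ω₁ ω₂ =>
    (subset_of_attracts hθ₁ hθ₂ hA.invariant (fun _ _ => (hA'.compact _ _).isClosed)
      (hA'.attracts A hA.mem) ω₁ ω₂).antisymm
    (subset_of_attracts hθ₁ hθ₂ hA'.invariant (fun _ _ => (hA.compact _ _).isClosed)
      (hA.attracts A' hA'.mem) ω₁ ω₂)

lemma isPullbackAttractor_omegaLimit [MeasurableSpace X] [CompleteSpace X]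
    [SecondCountableTopology X] [BorelSpace X] (hθ₁ : IsGroupAction θ₁) (hθ₂ : IsGroupAction θ₂)
    (hθ₂P : ∀ t, MeasurePreserving (θ₂ t) P P) (hΦ : IsCocycle θ₁ θ₂ Φ)
    (h𝒟 : NeighborhoodClosed 𝒟) (hac : AsymptoticallyCompact θ₁ θ₂ Φ 𝒟)
    (hK : IsClosedMeasurableAbsorbingSet θ₁ θ₂ Φ P 𝒟 K) :
    IsPullbackAttractor θ₁ θ₂ Φ P 𝒟 (omegaLimit θ₁ θ₂ Φ K) where
  mem := by
    obtain ⟨ε, hε, hnbhd⟩ := h𝒟 K hK.1.1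
    exact hnbhd _ fun ω₁ ω₂ =>
      ⟨omegaLimit_nonempty hθ₁ hθ₂ hΦ hac hK.1 (fun _ _ => (hK.2.1 _ _).2) ω₁ ω₂,
        (omegaLimit_subset hK.1 (fun _ _ => (hK.2.1 _ _).1) ω₁ ω₂).trans
          (Metric.self_subset_thickening hε _)⟩
  compact := isCompact_omegaLimit hθ₁ hθ₂ hΦ hac hK.1
  measurable := nullMeasurable_infDist_omegaLimit hθ₁ hθ₂ hθ₂P hΦ hac hK
  invariant := omegaLimit_invariant hθ₁ hθ₂ hΦ hac hK.1
  attracts _ hB := omegaLimit_attracts hθ₁ hθ₂ hΦ hac hK.1 hB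

end PullbackAttractor

section QuasiSolution

variable {Ω₁ Ω₂ X : Type*} {θ₁ : ℝ → Ω₁ → Ω₁} {θ₂ : ℝ → Ω₂ → Ω₂} {Φ : ℝ → Ω₁ → Ω₂ → X → X}
  {A : Ω₁ → Ω₂ → Set X}

lemma exists_backward_chain (hθ₁ : IsGroupAction θ₁) (hθ₂ : IsGroupAction θ₂)
    (hA : Invariant θ₁ θ₂ Φ A) {σ : Ω₁} {ρ : Ω₂} {a : X} (ha : a ∈ A σ ρ) :
    ∃ g : ℕ → X, g 0 = a ∧ (∀ k : ℕ, g k ∈ A (θ₁ (-k) σ) (θ₂ (-k) ρ)) ∧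
      ∀ k : ℕ, Φ 1 (θ₁ (-(k + 1 : ℕ)) σ) (θ₂ (-(k + 1 : ℕ)) ρ) (g (k + 1)) = g k := by
  have hpre : ∀ (k : ℕ) (y : X), y ∈ A (θ₁ (-k) σ) (θ₂ (-k) ρ) →
      ∃ z ∈ A (θ₁ (-(k + 1 : ℕ)) σ) (θ₂ (-(k + 1 : ℕ)) ρ),
        Φ 1 (θ₁ (-(k + 1 : ℕ)) σ) (θ₂ (-(k + 1 : ℕ)) ρ) z = y := by
    intro k y hy
    have e₁ : θ₁ 1 (θ₁ (-(k + 1 : ℕ)) σ) = θ₁ (-k) σ := hθ₁.apply_apply_eq (by push_cast; ring) σ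
    have e₂ : θ₂ 1 (θ₂ (-(k + 1 : ℕ)) ρ) = θ₂ (-k) ρ := hθ₂.apply_apply_eq (by push_cast; ring) ρ
    rwa [← mem_image, hA 1 zero_le_one, e₁, e₂]
  choose! pre hpreA hpreΦ using hpre
  let g : ℕ → X := fun k => Nat.rec a pre k
  have hg : ∀ k : ℕ, g k ∈ A (θ₁ (-k) σ) (θ₂ (-k) ρ) := by
    intro k
    induction k with
    | zero => simpa [g, hθ₁.1, hθ₂.1] using ha
    | succ k ih => exact hpreA k _ ih
  exact ⟨g, rfl, hg, fun k => hpreΦ k _ (hg k)⟩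

variable [MetricSpace X] [MeasurableSpace X] [MeasurableSpace Ω₂]

lemma exists_complete_trajectory (hθ₁ : IsGroupAction θ₁) (hθ₂ : IsGroupAction θ₂)
    (hΦ : IsCocycle θ₁ θ₂ Φ) (hA : Invariant θ₁ θ₂ Φ A) {σ : Ω₁} {ρ : Ω₂} {a : X}
    (ha : a ∈ A σ ρ) :
    ∃ v : ℝ → X, v 0 = a ∧ (∀ r, v r ∈ A (θ₁ r σ) (θ₂ r ρ)) ∧
      ∀ t r, 0 ≤ t → Φ t (θ₁ r σ) (θ₂ r ρ) (v r) = v (t + r) := by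
  obtain ⟨g, hg0, hgA, hgΦ⟩ := exists_backward_chain hθ₁ hθ₂ hA ha
  -- `F k r` runs the chain from time `-k`; it does not depend on `k` once `r + k ≥ 0`.
  set F : ℕ → ℝ → X := fun k r => Φ (r + k) (θ₁ (-k) σ) (θ₂ (-k) ρ) (g k) with hF
  have hθ_add : ∀ (k : ℕ) (r : ℝ),
      θ₁ (r + k) (θ₁ (-k) σ) = θ₁ r σ ∧ θ₂ (r + k) (θ₂ (-k) ρ) = θ₂ r ρ := fun k r =>
    ⟨hθ₁.apply_apply_eq (by ring) σ, hθ₂.apply_apply_eq (by ring) ρ⟩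
  have hF_succ : ∀ (k : ℕ) (r : ℝ), 0 ≤ r + k → F (k + 1) r = F k r := by
    intro k r hr
    have e₁ : θ₁ 1 (θ₁ (-(k + 1 : ℕ)) σ) = θ₁ (-k) σ := hθ₁.apply_apply_eq (by push_cast; ring) σ
    have e₂ : θ₂ 1 (θ₂ (-(k + 1 : ℕ)) ρ) = θ₂ (-k) ρ := hθ₂.apply_apply_eq (by push_cast; ring) ρ
    simp only [hF]
    rw [← hgΦ k, ← e₁, ← e₂, ← hΦ.cocycle _ _ hr zero_le_one]
    congr 1
    push_cast
    ring
  have hF_mono : ∀ (r : ℝ) (k m : ℕ), 0 ≤ r + k → k ≤ m → F m r = F k r := by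
    intro r k m hr hkm
    induction m, hkm using Nat.le_induction with
    | base => rfl
    | succ m hkm ih => rw [hF_succ m r (hr.trans (by gcongr)), ih]
  have hceil : ∀ r : ℝ, 0 ≤ r + ⌈-r⌉₊ := fun r => by linarith [Nat.le_ceil (-r)]
  have hFv : ∀ (k : ℕ) (r : ℝ), 0 ≤ r + k → F k r = F ⌈-r⌉₊ r := fun k r hr =>
    (hF_mono r k _ hr (le_max_left _ _)).symm.trans
      (hF_mono r _ (max k ⌈-r⌉₊) (hceil r) (le_max_right _ _))
  refine ⟨fun r => F ⌈-r⌉₊ r, ?_, fun r => ?_, fun t r ht => ?_⟩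
  · show F ⌈-(0 : ℝ)⌉₊ 0 = a
    rw [← hFv 0 0 (by simp)]
    simp [hF, hθ₁.1, hθ₂.1, hΦ.map_zero, hg0]
  · have h := hA (r + ⌈-r⌉₊) (hceil r) (θ₁ (-⌈-r⌉₊) σ) (θ₂ (-⌈-r⌉₊) ρ)
    rw [(hθ_add _ r).1, (hθ_add _ r).2] at h
    exact h ▸ mem_image_of_mem _ (hgA _)
  · show Φ t (θ₁ r σ) (θ₂ r ρ) (F ⌈-r⌉₊ r) = F ⌈-(t + r)⌉₊ (t + r)
    rw [← hFv ⌈-r⌉₊ (t + r) (by linarith [hceil r])]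
    simp only [hF]
    rw [← (hθ_add _ r).1, ← (hθ_add _ r).2, ← hΦ.cocycle _ _ ht (hceil r), add_assoc]

end QuasiSolution

section QuasiSolutionShift

variable {Ω₂ X : Type*} [MetricSpace X] [MeasurableSpace X] [MeasurableSpace Ω₂]
  {θ₂ : ℝ → Ω₂ → Ω₂} {Φ : ℝ → ℝ → Ω₂ → X → X} {A D : ℝ → Ω₂ → Set X}

lemma IsQuasiSolution.mem_of_attracts (hθ₂ : IsGroupAction θ₂) {ξ : ℝ → Ω₂ → X}
    (hξ : IsQuasiSolution θ₂ Φ ξ) (hξD : ∀ t ω, ξ t ω ∈ D t ω)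
    (hDA : Attracts (fun t h => h + t) θ₂ Φ D A) {τ : ℝ} {ω : Ω₂} (hA : IsClosed (A τ ω)) :
    ξ τ ω ∈ A τ ω := by
  refine mem_of_tendsto_hausSemidist hA ((eventually_ge_atTop 0).mono fun t ht => ?_) (hDA τ ω)
  refine ⟨ξ (τ + -t) (θ₂ (-t) ω), hξD _ _, ?_⟩
  show Φ t (τ + -t) (θ₂ (-t) ω) (ξ (τ + -t) (θ₂ (-t) ω)) = ξ τ ω
  rw [hξ t _ ht, hθ₂.apply_neg_apply]
  congr 1
  ring

lemma exists_quasiSolution_mem_of_invariant (hθ₂ : IsGroupAction θ₂)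
    (hΦ : IsCocycle (fun t h => h + t) θ₂ Φ) (hA : Invariant (fun t h => h + t) θ₂ Φ A)
    {τ : ℝ} (hAne : ∀ ρ, (A τ ρ).Nonempty) {ω : Ω₂} {x : X} (hx : x ∈ A τ ω) :
    ∃ ξ : ℝ → Ω₂ → X, IsQuasiSolution θ₂ Φ ξ ∧ (∀ t ω', ξ t ω' ∈ A t ω') ∧ ξ τ ω = x := by
  classical
  have ha : ∀ ρ, ∃ a ∈ A τ ρ, ρ = ω → a = x := fun ρ =>
    if h : ρ = ω then ⟨x, h ▸ hx, fun _ => rfl⟩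
    else ⟨_, (hAne ρ).some_mem, fun h' => absurd h' h⟩
  choose a ha hax using ha
  choose v hv0 hvA hvΦ using fun ρ =>
    exists_complete_trajectory isGroupAction_add hθ₂ hΦ hA (ha ρ)
  have hθ_cancel : ∀ (τ' : ℝ) (ω' : Ω₂), θ₂ (τ' - τ) (θ₂ (τ - τ') ω') = ω' := fun τ' ω' => by
    rw [hθ₂.apply_apply_eq (sub_add_sub_cancel τ τ' τ), sub_self, hθ₂.1]
  -- the orbit of `(τ', ω')` under `(t, (τ', ω')) ↦ (τ' + t, θ₂ t ω')` crosses the fibre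
  -- over `τ` exactly once, at `θ₂ (τ - τ') ω'`
  refine ⟨fun τ' ω' => v (θ₂ (τ - τ') ω') (τ' - τ), fun t τ' ht ω' => ?_, fun τ' ω' => ?_, ?_⟩
  · have h := hvΦ (θ₂ (τ - τ') ω') t (τ' - τ) ht
    simp only [add_sub_cancel, hθ_cancel] at h
    dsimp only
    rw [h, hθ₂.apply_apply_eq (by ring : t + (τ - (t + τ')) = τ - τ'), add_sub_assoc]
  · simpa only [add_sub_cancel, hθ_cancel] using hvA (θ₂ (τ - τ') ω') (τ' - τ)
  · simp only [sub_self, hθ₂.1, hv0, hax ω rfl]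

end QuasiSolutionShift

theorem attractor_eq_quasiSolutions_general
    {Ω₂ X : Type*}
    [MetricSpace X] [CompleteSpace X] [SecondCountableTopology X]
    [MeasurableSpace X] [BorelSpace X]
    [MeasurableSpace Ω₂] (P : Measure Ω₂)
    (θ₂ : ℝ → Ω₂ → Ω₂)
    (hθ₂ : IsGroupAction θ₂)
    (hθ₂pres : ∀ t : ℝ, MeasurePreserving (θ₂ t) P P)
    (Φ : ℝ → ℝ → Ω₂ → X → X)
    (hΦ : IsCocycle (fun t h => h + t) θ₂ Φ)
    (𝒟 : Set (ℝ → Ω₂ → Set X))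
    (h𝒟nc : NeighborhoodClosed 𝒟)
    (hac : AsymptoticallyCompact (fun t h => h + t) θ₂ Φ 𝒟)
    (K : ℝ → Ω₂ → Set X)
    (hK : IsClosedMeasurableAbsorbingSet (fun t h => h + t) θ₂ Φ P 𝒟 K) :
    ∃ A : ℝ → Ω₂ → Set X, IsPullbackAttractor (fun t h => h + t) θ₂ Φ P 𝒟 A ∧
      (∀ A' : ℝ → Ω₂ → Set X,
        IsPullbackAttractor (fun t h => h + t) θ₂ Φ P 𝒟 A' → A' = A) ∧
      ∀ (τ : ℝ) (ω : Ω₂), A τ ω =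
        {x : X | ∃ ξ : ℝ → Ω₂ → X, IsQuasiSolution θ₂ Φ ξ ∧
          (∃ D ∈ 𝒟, ∀ (t : ℝ) (ω' : Ω₂), ξ t ω' ∈ D t ω') ∧ ξ τ ω = x} := by
  have hA := isPullbackAttractor_omegaLimit isGroupAction_add hθ₂ hθ₂pres hΦ h𝒟nc hac hK
  refine ⟨_, hA, fun A' hA' => hA'.eq isGroupAction_add hθ₂ hA, fun τ ω => ?_⟩
  ext x
  constructor
  · intro hx
    obtain ⟨ξ, hξ, hξA, rfl⟩ := exists_quasiSolution_mem_of_invariant hθ₂ hΦ hA.invariant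
      (fun ρ => omegaLimit_nonempty isGroupAction_add hθ₂ hΦ hac hK.1 (fun _ _ => (hK.2.1 _ _).2)
        τ ρ) hx
    exact ⟨ξ, hξ, ⟨_, hA.mem, hξA⟩, rfl⟩
  · rintro ⟨ξ, hξ, ⟨D, hD, hξD⟩, rfl⟩
    exact hξ.mem_of_attracts hθ₂ hξD (hA.attracts D hD) (hA.compact τ ω).isClosed

theorem attractor_eq_quasiSolutions
    {Ω₂ X : Type*}
    [MetricSpace X] [CompleteSpace X] [SecondCountableTopology X]
    [MeasurableSpace X] [BorelSpace X]
    [MeasurableSpace Ω₂] (P : Measure Ω₂) [IsProbabilityMeasure P]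
    (θ₂ : ℝ → Ω₂ → Ω₂)
    (hθ₂ : IsGroupAction θ₂)
    (hθ₂meas : Measurable fun p : ℝ × Ω₂ => θ₂ p.1 p.2)
    (hθ₂pres : ∀ t : ℝ, MeasurePreserving (θ₂ t) P P)
    (Φ : ℝ → ℝ → Ω₂ → X → X)
    (hΦ : IsCocycle (fun t h => h + t) θ₂ Φ)
    (𝒟 : Set (ℝ → Ω₂ → Set X))
    (h𝒟ne : FamiliesOfNonemptySets 𝒟)
    (h𝒟nc : NeighborhoodClosed 𝒟)
    (hac : AsymptoticallyCompact (fun t h => h + t) θ₂ Φ 𝒟)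
    (K : ℝ → Ω₂ → Set X)
    (hK : IsClosedMeasurableAbsorbingSet (fun t h => h + t) θ₂ Φ P 𝒟 K) :
    ∃ A : ℝ → Ω₂ → Set X, IsPullbackAttractor (fun t h => h + t) θ₂ Φ P 𝒟 A ∧
      (∀ A' : ℝ → Ω₂ → Set X,
        IsPullbackAttractor (fun t h => h + t) θ₂ Φ P 𝒟 A' → A' = A) ∧
      ∀ (τ : ℝ) (ω : Ω₂), A τ ω =
        {x : X | ∃ ξ : ℝ → Ω₂ → X, IsQuasiSolution θ₂ Φ ξ ∧
          (∃ D ∈ 𝒟, ∀ (t : ℝ) (ω' : Ω₂), ξ t ω' ∈ D t ω') ∧ ξ τ ω = x} :=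
  attractor_eq_quasiSolutions_general P θ₂ hθ₂ hθ₂pres Φ hΦ 𝒟 h𝒟nc hac K hK

end RDS
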